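/- Assume the inductive setting, with f an element of Sym(Z), and let V be the subgroup of Sym(Z) generated by H₁ together with f. Then (Z, Y₁ ∪ Supp(f), V, W₀) is a pre-wreath structure, and its carrier {W₀v : v ∈ V} equals the union over n ∈ ℤ of the families {W₀rfⁿ : r ∈ R₁}. -/

import Mathlib

/-- A pre-wreath structure `(Z, Y, H, X)`: `H` is a nontrivial subgroup of `Sym(Z)`,
`X ⊆ Y ⊆ Z`, `X` nonempty, every element of `H` fixes every point outside `Y`,
if `Xh` meets `X` then `h` is the identity on `X`, and every nontrivial `h ∈ H`
moves some set `Xj` (`j ∈ H`). (Images are written with Lean's left action, so the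
set `Xh` of the paper is `⇑h '' X`.) -/
def IsPreWreath {Z : Type*} (Y : Set Z) (H : Subgroup (Equiv.Perm Z)) (X : Set Z) : Prop :=
  H ≠ ⊥ ∧
  (∀ h ∈ H, ∀ z : Z, z ∉ Y → h z = z) ∧
  X ⊆ Y ∧
  X.Nonempty ∧
  (∀ h ∈ H, (⇑h '' X ∩ X).Nonempty → ∀ x ∈ X, h x = x) ∧
  (∀ h ∈ H, h ≠ 1 → ∃ j ∈ H, ⇑h '' (⇑j '' X) ≠ ⇑j '' X)

/-- The carrier `XH = {Xh : h ∈ H}` of a pre-wreath structure. -/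
def wreathCarrier {Z : Type*} (H : Subgroup (Equiv.Perm Z)) (X : Set Z) : Set (Set Z) :=
  {A : Set Z | ∃ h ∈ H, A = ⇑h '' X}

/-- The support of a subgroup of `Sym(Z)`: the points moved by some element. -/
def Supp {Z : Type*} (K : Subgroup (Equiv.Perm Z)) : Set Z :=
  {z : Z | ∃ g ∈ K, g z ≠ z}

/-- The inductive setting: `(Z, fY₀, H₁, Y₀)` is a pre-wreath structure (`Y₁ = Y₀f` is
the image of `Y₀` under the bijection `f`), `Y₀ ⊆ Supp(H₁) ⊆ Y₁` with `Supp(H₁) ≠ Y₁`,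
and `W₀` is a nonempty subset of `Y₀` whose image under `f` misses `Supp(H₁)`. -/
def InductiveSetting {Z : Type*} (H₁ : Subgroup (Equiv.Perm Z)) (f : Equiv.Perm Z)
    (Y₀ W₀ : Set Z) : Prop :=
  IsPreWreath (⇑f '' Y₀) H₁ Y₀ ∧
  Y₀ ⊆ Supp H₁ ∧ Supp H₁ ⊆ ⇑f '' Y₀ ∧ Supp H₁ ≠ ⇑f '' Y₀ ∧
  W₀.Nonempty ∧ W₀ ⊆ Y₀ ∧ (⇑f '' W₀) ∩ Supp H₁ = ∅

/-- `Hᵢ`, the conjugate of `H₁` carried over by `f^(i-1)`: this is the paper's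
`f^{-(i-1)} H₁ f^{i-1}` written in right-action notation, i.e. the subgroup
`{f^(i-1) h f^(-(i-1)) : h ∈ H₁}` of permutations acting on the left. -/
def Hseq {Z : Type*} (H₁ : Subgroup (Equiv.Perm Z)) (f : Equiv.Perm Z) (i : ℤ) :
    Subgroup (Equiv.Perm Z) :=
  Subgroup.map (MulAut.conj (f ^ (i - 1))).toMonoidHom H₁

/-- `R_j`, the subgroup generated by the `Hᵢ` with `i ≥ j`. -/
def Rseq {Z : Type*} (H₁ : Subgroup (Equiv.Perm Z)) (f : Equiv.Perm Z) (j : ℤ) :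
    Subgroup (Equiv.Perm Z) :=
  Subgroup.closure (⋃ i ∈ {i : ℤ | j ≤ i}, (Hseq H₁ f i : Set (Equiv.Perm Z)))

/-- `Lᵢ`, the subgroup generated by the `H_j` with `j < i`. -/
def Lseq {Z : Type*} (H₁ : Subgroup (Equiv.Perm Z)) (f : Equiv.Perm Z) (i : ℤ) :
    Subgroup (Equiv.Perm Z) :=
  Subgroup.closure (⋃ j ∈ {j : ℤ | j < i}, (Hseq H₁ f j : Set (Equiv.Perm Z)))

/-- `M`, the subgroup generated by all the `Hᵢ`, `i ∈ ℤ`. -/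
def Mgrp {Z : Type*} (H₁ : Subgroup (Equiv.Perm Z)) (f : Equiv.Perm Z) :
    Subgroup (Equiv.Perm Z) :=
  Subgroup.closure (⋃ i : ℤ, (Hseq H₁ f i : Set (Equiv.Perm Z)))

/-- `Wᵢ = W₀fⁱ`, the image of `W₀` under the `i`-th power of `f`. -/
def Wseq {Z : Type*} (W₀ : Set Z) (f : Equiv.Perm Z) (i : ℤ) : Set Z :=
  ⇑(f ^ i) '' W₀

/-!
Conjugation by `f` shifts `Hᵢ` to `Hᵢ₊₁`, so every element of `V = ⟨H₁, f⟩` is `fⁿ m` with `m`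
in a finite window `K_{a,b} = ⟨Hᵢ : a ≤ i ≤ b⟩`. Because `H_b` permutes the translates of
`Y_{b-1}` rigidly and `K_{a,b-1}` lives on `Y_{b-1}`, the window embeds in the wreath product
`K_{a,b-1} ≀ H_b`: every element is `μ d` with `μ ∈ H_b` and `d` acting on each block `c Y_{b-1}`
as a conjugate of an element of `K_{a,b-1}`.

Peeling off one level at a time, an element of `K_{a,b}` acts on `W₀` as an element of `R₁`,
and either fixes `W₀` pointwise or carries it into one shell `f^q (Supp H₁ ∖ Y₀)`. Translates
`Wₙ` and shells lie in layers `Y_{p+1} ∖ Y_p` of the increasing chain `(Yᵢ)`, which gives the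
carrier and condition (ii). Faithfulness (iii) is by induction on the window: if `μ ≠ 1` it moves
a block `c Y_{b-1}` off itself and with it a translate of `W_{b-1}`; if `μ = 1`, a nontrivial `d`
acts on some block as a nontrivial element of `K_{a,b-1}`, which moves a carrier set inside
`Y_{b-1}` by induction. If `fⁿ m` has `n ≠ 0` it moves `W_{b+1}`, which `m` fixes.
-/

section

open Set Subgroup Equiv

namespace Equiv.Perm

variable {Z : Type*}

lemma image_coe_mul (u v : Perm Z) (X : Set Z) : ⇑(u * v) '' X = u '' (v '' X) := by
  rw [coe_mul, image_comp]

lemma image_conj (σ g : Perm Z) (X : Set Z) : ⇑(σ * g * σ⁻¹) '' (σ '' X) = σ '' (g '' X) := by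
  rw [image_coe_mul, image_coe_mul, ← image_coe_mul σ⁻¹, inv_mul_cancel, coe_one, image_id]

lemma image_image_eq_image_conj (h j : Perm Z) (X : Set Z) :
    ⇑h '' (⇑j '' X) = ⇑j '' (⇑(j⁻¹ * h * j) '' X) := by
  rw [← image_coe_mul, ← image_coe_mul, mul_assoc, mul_inv_cancel_left]

lemma image_image_eq_of_forall_mem {d c k : Perm Z} {A : Set Z}
    (h : ∀ y ∈ A, d (c y) = c (k y)) : ⇑d '' (⇑c '' A) = ⇑c '' (⇑k '' A) := by
  simp only [image_image]
  exact image_congr h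

lemma mem_fixingSubgroup_iff_apply {g : Perm Z} {s : Set Z} :
    g ∈ fixingSubgroup (Perm Z) s ↔ ∀ z ∈ s, g z = z := by
  simp [_root_.mem_fixingSubgroup_iff]

lemma mem_fixingSubgroup_compl_iff_apply {g : Perm Z} {s : Set Z} :
    g ∈ fixingSubgroup (Perm Z) sᶜ ↔ ∀ z ∉ s, g z = z :=
  mem_fixingSubgroup_iff_apply

lemma image_eq_of_mem_fixingSubgroup_compl {g : Perm Z} {s : Set Z}
    (hg : g ∈ fixingSubgroup (Perm Z) sᶜ) : ⇑g '' s = s :=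
  image_perm fun z hz => by_contra fun hzs => hz (mem_fixingSubgroup_compl_iff_apply.mp hg z hzs)

lemma image_eq_of_mem_fixingSubgroup {g : Perm Z} {s : Set Z}
    (hg : g ∈ fixingSubgroup (Perm Z) s) : ⇑g '' s = s :=
  (image_congr (mem_fixingSubgroup_iff_apply.mp hg)).trans (image_id s)

lemma mem_map_conj {K : Subgroup (Perm Z)} {σ h : Perm Z} :
    h ∈ K.map (MulAut.conj σ).toMonoidHom ↔ ∃ g ∈ K, σ * g * σ⁻¹ = h := by
  simp [Subgroup.mem_map]

end Equiv.Perm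

open Equiv.Perm

variable {Z : Type*}

lemma le_fixingSubgroup_compl_Supp (K : Subgroup (Perm Z)) :
    K ≤ fixingSubgroup (Perm Z) (Supp K)ᶜ := fun g hg =>
  mem_fixingSubgroup_compl_iff_apply.mpr fun _ hz => by_contra fun hgz => hz ⟨g, hg, hgz⟩

lemma Supp_map_conj (K : Subgroup (Perm Z)) (σ : Perm Z) :
    Supp (K.map (MulAut.conj σ).toMonoidHom) = σ '' Supp K := by
  have hfix (g : Perm Z) (z : Z) : (σ * g * σ⁻¹) z = z ↔ g (σ⁻¹ z) = σ⁻¹ z := by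
    rw [mul_apply, mul_apply, ← eq_inv_iff_eq]
  ext z
  simp only [Supp, mem_ofPred_eq, mem_map_conj, mem_image_equiv, ← Perm.inv_def]
  constructor
  · rintro ⟨_, ⟨g, hg, rfl⟩, hz⟩
    exact ⟨g, hg, fun h => hz ((hfix g z).mpr h)⟩
  · rintro ⟨g, hg, hz⟩
    exact ⟨_, ⟨g, hg, rfl⟩, fun h => hz ((hfix g z).mp h)⟩

lemma Monotone.subset_or_disjoint_of_subset_sdiff {s : ℤ → Set Z} (hs : Monotone s)
    {A : Set Z} {p : ℤ} (hA : A ⊆ s (p + 1) \ s p) (k : ℤ) : A ⊆ s k ∨ Disjoint A (s k) := by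
  rw [subset_sdiff] at hA
  rcases le_or_gt (p + 1) k with hpk | hkp
  · exact .inl (hA.1.trans (hs hpk))
  · exact .inr (hA.2.mono_right (hs (by omega)))

def IsRigidBlock (H : Subgroup (Perm Z)) (B : Set Z) : Prop :=
  ∀ h ∈ H, (⇑h '' B ∩ B).Nonempty → ∀ x ∈ B, h x = x

lemma IsRigidBlock.mem_fixingSubgroup_or_disjoint {H : Subgroup (Perm Z)} {B : Set Z}
    (hB : IsRigidBlock H B) {h : Perm Z} (hh : h ∈ H) :
    h ∈ fixingSubgroup (Perm Z) B ∨ Disjoint (⇑h '' B) B := by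
  rw [mem_fixingSubgroup_iff_apply, disjoint_iff_inter_eq_empty, ← not_nonempty_iff_eq_empty]
  exact (em _).imp (hB h hh) id

namespace IsPreWreath

variable {Y X : Set Z} {H : Subgroup (Perm Z)}

lemma isRigidBlock (hW : IsPreWreath Y H X) : IsRigidBlock H X := hW.2.2.2.2.1

lemma exists_disjoint_image (hW : IsPreWreath Y H X) {h : Perm Z} (hh : h ∈ H) (h1 : h ≠ 1) :
    ∃ j ∈ H, Disjoint (⇑h '' (⇑j '' X)) (⇑j '' X) := by
  obtain ⟨j, hj, hne⟩ := hW.2.2.2.2.2 h hh h1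
  refine ⟨j, hj, ?_⟩
  rw [image_image_eq_image_conj] at hne ⊢
  rcases hW.isRigidBlock.mem_fixingSubgroup_or_disjoint (mul_mem (mul_mem (inv_mem hj) hh) hj)
    with hfix | hdisj
  · exact absurd (by rw [image_eq_of_mem_fixingSubgroup hfix]) hne
  · exact (disjoint_image_iff j.injective).mpr hdisj

lemma map_conj (hW : IsPreWreath Y H X) (σ : Perm Z) :
    IsPreWreath (σ '' Y) (H.map (MulAut.conj σ).toMonoidHom) (σ '' X) := by
  obtain ⟨hbot, hout, hXY, hX, hrigid, hmove⟩ := hW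
  refine ⟨?_, ?_, image_mono hXY, hX.image σ, ?_, ?_⟩
  · rwa [Ne, map_eq_bot_iff_of_injective _ (MulAut.conj σ).injective]
  · intro h hh z hz
    obtain ⟨g, hg, rfl⟩ := mem_map_conj.mp hh
    have hz' : σ⁻¹ z ∉ Y := fun h => hz (mem_image_equiv.mpr h)
    rw [mul_apply, mul_apply, hout g hg _ hz']
    exact σ.apply_symm_apply z
  · intro h hh hne
    obtain ⟨g, hg, rfl⟩ := mem_map_conj.mp hh
    rw [image_conj, ← image_inter σ.injective, image_nonempty] at hne
    rintro _ ⟨x, hx, rfl⟩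
    simp [hrigid g hg hne x hx]
  · intro h hh h1
    obtain ⟨g, hg, rfl⟩ := mem_map_conj.mp hh
    obtain ⟨j, hj, hne⟩ := hmove g hg (by rintro rfl; simp at h1)
    refine ⟨σ * j * σ⁻¹, mem_map_conj.mpr ⟨j, hj, rfl⟩, ?_⟩
    rw [image_conj, image_conj]
    exact (image_injective.mpr σ.injective).ne hne

lemma sup_zpowers_le_fixingSubgroup (hW : IsPreWreath Y H X) (f : Perm Z) :
    H ⊔ zpowers f ≤ fixingSubgroup (Perm Z) (Y ∪ {z | f z ≠ z})ᶜ := by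
  refine sup_le (fun h hh => mem_fixingSubgroup_compl_iff_apply.mpr fun z hz =>
    hW.2.1 h hh z fun hY => hz (.inl hY)) (zpowers_le.mpr ?_)
  exact mem_fixingSubgroup_compl_iff_apply.mpr fun z hz => not_not.mp fun h => hz (.inr h)

end IsPreWreath

section WreathBase

variable {H K : Subgroup (Perm Z)} {B : Set Z}

/-- The base group of the wreath product `K ≀ H` acting on the blocks `c '' B`, `c ∈ H`. -/
def wreathBase (H K : Subgroup (Perm Z)) (B : Set Z) (hK : K ≤ fixingSubgroup (Perm Z) Bᶜ) :
    Subgroup (Perm Z) where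
  carrier := {d | (∀ z, (∀ c ∈ H, z ∉ ⇑c '' B) → d z = z) ∧
    ∀ c ∈ H, ∃ k ∈ K, ∀ y ∈ B, d (c y) = c (k y)}
  one_mem' := ⟨fun _ _ => rfl, fun _ _ => ⟨1, K.one_mem, fun _ _ => rfl⟩⟩
  mul_mem' := by
    rintro d₁ d₂ ⟨hout₁, hin₁⟩ ⟨hout₂, hin₂⟩
    refine ⟨fun z hz => by rw [mul_apply, hout₂ z hz, hout₁ z hz], fun c hc => ?_⟩
    obtain ⟨k₁, hk₁, h₁⟩ := hin₁ c hc
    obtain ⟨k₂, hk₂, h₂⟩ := hin₂ c hc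
    refine ⟨k₁ * k₂, mul_mem hk₁ hk₂, fun y hy => ?_⟩
    have hk₂y : k₂ y ∈ B := image_eq_of_mem_fixingSubgroup_compl (hK hk₂) ▸ mem_image_of_mem _ hy
    rw [mul_apply, mul_apply, h₂ y hy, h₁ _ hk₂y]
  inv_mem' := by
    rintro d ⟨hout, hin⟩
    refine ⟨fun z hz => inv_eq_iff_eq.mpr (hout z hz).symm, fun c hc => ?_⟩
    obtain ⟨k, hk, h⟩ := hin c hc
    refine ⟨k⁻¹, inv_mem hk, fun y hy => ?_⟩
    have hky : k⁻¹ y ∈ B :=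
      image_eq_of_mem_fixingSubgroup_compl (hK (inv_mem hk)) ▸ mem_image_of_mem _ hy
    rw [inv_eq_iff_eq, h _ hky]
    exact congrArg c (k.apply_symm_apply y).symm

variable {hK : K ≤ fixingSubgroup (Perm Z) Bᶜ}

lemma conj_mem_wreathBase {h d : Perm Z} (hh : h ∈ H) (hd : d ∈ wreathBase H K B hK) :
    h * d * h⁻¹ ∈ wreathBase H K B hK := by
  obtain ⟨hout, hin⟩ := hd
  refine ⟨fun z hz => ?_, fun c hc => ?_⟩
  · have : ∀ c ∈ H, h⁻¹ z ∉ ⇑c '' B := by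
      rintro c hc ⟨y, hy, hcy⟩
      exact hz (h * c) (mul_mem hh hc) ⟨y, hy, by rw [mul_apply, hcy]; exact h.apply_symm_apply z⟩
    rw [mul_apply, mul_apply, hout _ this]
    exact h.apply_symm_apply z
  · obtain ⟨k, hk, hdk⟩ := hin (h⁻¹ * c) (mul_mem (inv_mem hh) hc)
    refine ⟨k, hk, fun y hy => ?_⟩
    have := hdk y hy
    simp only [mul_apply] at this ⊢
    rw [this]
    exact h.apply_symm_apply _

lemma le_normalizer_wreathBase : H ≤ normalizer (wreathBase H K B hK : Set (Perm Z)) := by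
  intro h hh
  rw [mem_normalizer_iff]
  refine fun d => ⟨conj_mem_wreathBase hh, fun hd => ?_⟩
  simpa [mul_assoc] using conj_mem_wreathBase (inv_mem hh) hd

lemma le_wreathBase (hH : IsRigidBlock H B) : K ≤ wreathBase H K B hK := by
  intro k hk
  have hkout := mem_fixingSubgroup_compl_iff_apply.mp (hK hk)
  refine ⟨fun z hz => hkout z ?_, fun c hc => ?_⟩
  · simpa using hz 1 H.one_mem
  · rcases hH.mem_fixingSubgroup_or_disjoint hc with hfix | hdisj
    · refine ⟨k, hk, fun y hy => ?_⟩
      have hky : k y ∈ B := image_eq_of_mem_fixingSubgroup_compl (hK hk) ▸ mem_image_of_mem _ hy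
      rw [mem_fixingSubgroup_iff_apply.mp hfix y hy, mem_fixingSubgroup_iff_apply.mp hfix _ hky]
    · exact ⟨1, K.one_mem, fun y hy => hkout _ (hdisj.notMem_of_mem_left (mem_image_of_mem c hy))⟩

lemma exists_mul_mem_wreathBase (hH : IsRigidBlock H B) {g : Perm Z} (hg : g ∈ H ⊔ K) :
    ∃ μ ∈ H, ∃ d ∈ wreathBase H K B hK, μ * d = g := by
  have hg' : g ∈ ((H ⊔ wreathBase H K B hK : Subgroup (Perm Z)) : Set (Perm Z)) :=
    sup_le_sup_left (le_wreathBase hH) H hg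
  rwa [coe_mul_of_left_le_normalizer_right _ _ le_normalizer_wreathBase, Set.mem_mul] at hg'

lemma exists_ne_one_of_mem_wreathBase {d : Perm Z} (hd : d ∈ wreathBase H K B hK) (hd1 : d ≠ 1) :
    ∃ c ∈ H, ∃ k ∈ K, k ≠ 1 ∧ ∀ y ∈ B, d (c y) = c (k y) := by
  obtain ⟨z, hz⟩ : ∃ z, d z ≠ z := not_forall.mp fun h => hd1 (Equiv.ext h)
  obtain ⟨c, hc, y, hy, rfl⟩ : ∃ c ∈ H, z ∈ ⇑c '' B := by
    by_contra! hout
    exact hz (hd.1 z hout)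
  obtain ⟨k, hk, hdk⟩ := hd.2 c hc
  exact ⟨c, hc, k, hk, by rintro rfl; exact hz (hdk y hy), hdk⟩

lemma IsPreWreath.exists_image_ne_of_mul_mem_wreathBase {Y : Set Z} (hW : IsPreWreath Y H B)
    {hK : K ≤ fixingSubgroup (Perm Z) Bᶜ} {μ d : Perm Z} (hμ : μ ∈ H) (hμ1 : μ ≠ 1)
    (hd : d ∈ wreathBase H K B hK) {A : Set Z} (hAB : A ⊆ B) (hA : A.Nonempty) :
    ∃ c ∈ H, ⇑(μ * d) '' (⇑c '' A) ≠ ⇑c '' A := by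
  obtain ⟨c, hc, hdisj⟩ := hW.exists_disjoint_image hμ hμ1
  obtain ⟨k, hk, hdk⟩ := hd.2 c hc
  have hkA : ⇑k '' A ⊆ B := image_eq_of_mem_fixingSubgroup_compl (hK hk) ▸ image_mono hAB
  have hdA : ⇑(μ * d) '' (⇑c '' A) ⊆ ⇑μ '' (⇑c '' B) := by
    rw [image_coe_mul, image_image_eq_of_forall_mem fun y hy => hdk y (hAB hy)]
    exact image_mono (image_mono hkA)
  refine ⟨c, hc, fun heq => (hA.image c).ne_empty ?_⟩
  exact disjoint_self.mp (hdisj.mono (heq ▸ hdA) (image_mono hAB))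

end WreathBase

def window (H₁ : Subgroup (Perm Z)) (f : Perm Z) (a b : ℤ) : Subgroup (Perm Z) :=
  ⨆ i ∈ Icc a b, Hseq H₁ f i

section Sequences

variable {H₁ : Subgroup (Perm Z)} {f : Perm Z}

lemma Wseq_add (X : Set Z) (a b : ℤ) : Wseq X f (a + b) = ⇑(f ^ a) '' Wseq X f b := by
  rw [Wseq, Wseq, zpow_add, image_coe_mul]

@[simp] lemma Wseq_zero (X : Set Z) : Wseq X f 0 = X := by simp [Wseq]

lemma image_image_eq_Wseq (X : Set Z) (i : ℤ) : ⇑(f ^ i) '' (f '' X) = Wseq X f (i + 1) := by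
  rw [Wseq, ← image_coe_mul, ← zpow_add_one]

@[simp] lemma Hseq_one : Hseq H₁ f 1 = H₁ := by
  ext; simp [Hseq]

lemma Supp_Hseq (i : ℤ) : Supp (Hseq H₁ f i) = ⇑(f ^ (i - 1)) '' Supp H₁ :=
  Supp_map_conj _ _

lemma zpow_mem_sup (n : ℤ) : f ^ n ∈ H₁ ⊔ zpowers f :=
  le_sup_right (α := Subgroup (Perm Z)) (zpow_mem_zpowers f n)

lemma Hseq_le_sup (i : ℤ) : Hseq H₁ f i ≤ H₁ ⊔ zpowers f := by
  intro _ h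
  obtain ⟨g, hg, rfl⟩ := mem_map_conj.mp h
  exact mul_mem (mul_mem (zpow_mem_sup _) (le_sup_left (α := Subgroup (Perm Z)) hg))
    (inv_mem (zpow_mem_sup _))

lemma Rseq_le_sup : Rseq H₁ f 1 ≤ H₁ ⊔ zpowers f :=
  (closure_le _).mpr (iUnion₂_subset fun i _ => Hseq_le_sup i)

lemma Hseq_le_Rseq {i : ℤ} (hi : 1 ≤ i) : Hseq H₁ f i ≤ Rseq H₁ f 1 :=
  fun _ hx => subset_closure (mem_biUnion (x := i) hi hx)

lemma Hseq_le_window {a b i : ℤ} (hi : i ∈ Icc a b) : Hseq H₁ f i ≤ window H₁ f a b :=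
  le_iSup₂ (f := fun i _ => Hseq H₁ f i) i hi

lemma window_mono {a a' b b' : ℤ} (ha : a' ≤ a) (hb : b ≤ b') :
    window H₁ f a b ≤ window H₁ f a' b' :=
  iSup₂_le fun _ hi => Hseq_le_window ⟨ha.trans hi.1, hi.2.trans hb⟩

lemma window_eq_bot {a b : ℤ} (hab : b < a) : window H₁ f a b = ⊥ :=
  eq_bot_iff.mpr (iSup₂_le fun _ hi => absurd (hi.1.trans hi.2) (not_le.mpr hab))

lemma window_le_sup (a b : ℤ) : window H₁ f a b ≤ Hseq H₁ f b ⊔ window H₁ f a (b - 1) := by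
  refine iSup₂_le fun i hi => ?_
  rcases eq_or_lt_of_le hi.2 with rfl | hib
  · exact le_sup_left
  · exact le_sup_of_le_right (Hseq_le_window ⟨hi.1, by omega⟩)

lemma exists_mem_window {m : Perm Z} (hm : m ∈ Mgrp H₁ f) : ∃ a b, m ∈ window H₁ f a b := by
  have hle : Mgrp H₁ f ≤ ⨆ n : ℕ, window H₁ f (-n) n :=
    (closure_le _).mpr <| iUnion_subset fun i x hx => le_iSup (fun n : ℕ => window H₁ f (-n) n)
      i.natAbs (Hseq_le_window ⟨by omega, by omega⟩ hx)
  obtain ⟨n, hn⟩ := (mem_iSup_of_directed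
    (Monotone.directed_le fun n n' h => window_mono (by omega) (by omega))).mp (hle hm)
  exact ⟨_, _, hn⟩

lemma map_conj_Hseq (i : ℤ) :
    (Hseq H₁ f i).map (MulAut.conj f).toMonoidHom = Hseq H₁ f (i + 1) := by
  rw [Hseq, Hseq, map_map]
  congr 1
  ext g : 1
  simp only [MonoidHom.comp_apply, MulEquiv.coe_toMonoidHom, MulAut.conj_apply]
  group

lemma Mgrp_eq_iSup : Mgrp H₁ f = ⨆ i, Hseq H₁ f i := by
  rw [Mgrp, Subgroup.closure_iUnion]
  simp_rw [closure_eq]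

lemma zpowers_le_normalizer_Mgrp : zpowers f ≤ normalizer (Mgrp H₁ f : Set (Perm Z)) := by
  rw [zpowers_le, mem_normalizer_iff_map_conj_eq, Mgrp_eq_iSup, Subgroup.map_iSup]
  exact (iSup_congr fun i => map_conj_Hseq i).trans ((Equiv.addRight 1).iSup_comp (g := Hseq H₁ f))

lemma exists_zpow_mul_of_mem_sup {v : Perm Z} (hv : v ∈ H₁ ⊔ zpowers f) :
    ∃ n : ℤ, ∃ m ∈ Mgrp H₁ f, f ^ n * m = v := by
  have hle : H₁ ⊔ zpowers f ≤ zpowers f ⊔ Mgrp H₁ f := by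
    refine sup_le (le_sup_of_le_right ?_) le_sup_left
    rw [Mgrp_eq_iSup]
    exact Hseq_one.ge.trans (le_iSup (Hseq H₁ f) 1)
  have hv' : v ∈ ((zpowers f ⊔ Mgrp H₁ f : Subgroup (Perm Z)) : Set (Perm Z)) := hle hv
  rw [coe_mul_of_left_le_normalizer_right _ _ zpowers_le_normalizer_Mgrp] at hv'
  obtain ⟨_, ⟨n, rfl⟩, m, hm, rfl⟩ := hv'
  exact ⟨n, m, hm, rfl⟩

lemma exists_zpow_mul_mem_window {v : Perm Z} (hv : v ∈ H₁ ⊔ zpowers f) :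
    ∃ n a b : ℤ, ∃ m ∈ window H₁ f a b, f ^ n * m = v := by
  obtain ⟨n, m, hm, rfl⟩ := exists_zpow_mul_of_mem_sup hv
  obtain ⟨a, b, hab⟩ := exists_mem_window hm
  exact ⟨n, a, b, m, hab, rfl⟩

end Sequences

namespace InductiveSetting

variable {H₁ : Subgroup (Perm Z)} {f : Perm Z} {Y₀ W₀ : Set Z}

lemma isPreWreath (hs : InductiveSetting H₁ f Y₀ W₀) : IsPreWreath (f '' Y₀) H₁ Y₀ := hs.1

lemma Y0_subset_Supp (hs : InductiveSetting H₁ f Y₀ W₀) : Y₀ ⊆ Supp H₁ := hs.2.1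

lemma Supp_subset_image_Y0 (hs : InductiveSetting H₁ f Y₀ W₀) : Supp H₁ ⊆ f '' Y₀ := hs.2.2.1

lemma W0_nonempty (hs : InductiveSetting H₁ f Y₀ W₀) : W₀.Nonempty := hs.2.2.2.2.1

lemma W0_subset_Y0 (hs : InductiveSetting H₁ f Y₀ W₀) : W₀ ⊆ Y₀ := hs.2.2.2.2.2.1

lemma disjoint_image_W0_Supp (hs : InductiveSetting H₁ f Y₀ W₀) : Disjoint (f '' W₀) (Supp H₁) :=
  disjoint_iff_inter_eq_empty.mpr hs.2.2.2.2.2.2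

lemma isPreWreath_Hseq (hs : InductiveSetting H₁ f Y₀ W₀) (i : ℤ) :
    IsPreWreath (Wseq Y₀ f i) (Hseq H₁ f i) (Wseq Y₀ f (i - 1)) := by
  have h := hs.isPreWreath.map_conj (f ^ (i - 1))
  rw [image_image_eq_Wseq, sub_add_cancel] at h
  exact h

lemma Y_subset_Supp_Hseq (hs : InductiveSetting H₁ f Y₀ W₀) (i : ℤ) :
    Wseq Y₀ f (i - 1) ⊆ Supp (Hseq H₁ f i) := by
  rw [Supp_Hseq]
  exact image_mono hs.Y0_subset_Supp

lemma Supp_Hseq_subset_Y (hs : InductiveSetting H₁ f Y₀ W₀) (i : ℤ) :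
    Supp (Hseq H₁ f i) ⊆ Wseq Y₀ f i := by
  rw [Supp_Hseq, ← sub_add_cancel i 1, ← image_image_eq_Wseq, add_sub_cancel_right]
  exact image_mono hs.Supp_subset_image_Y0

lemma monotone_Y (hs : InductiveSetting H₁ f Y₀ W₀) : Monotone (Wseq Y₀ f) :=
  monotone_int_of_le_succ fun n => by
    simpa using (hs.Y_subset_Supp_Hseq (n + 1)).trans (hs.Supp_Hseq_subset_Y (n + 1))

lemma monotone_Supp_Hseq (hs : InductiveSetting H₁ f Y₀ W₀) :
    Monotone fun i => Supp (Hseq H₁ f i) :=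
  monotone_int_of_le_succ fun n =>
    (hs.Supp_Hseq_subset_Y n).trans (by simpa using hs.Y_subset_Supp_Hseq (n + 1))

lemma W_subset_Y (hs : InductiveSetting H₁ f Y₀ W₀) (i : ℤ) : Wseq W₀ f i ⊆ Wseq Y₀ f i :=
  image_mono hs.W0_subset_Y0

lemma disjoint_W_Supp_Hseq (hs : InductiveSetting H₁ f Y₀ W₀) {i j : ℤ} (hji : j ≤ i) :
    Disjoint (Wseq W₀ f i) (Supp (Hseq H₁ f j)) := by
  refine Disjoint.mono_right (hs.monotone_Supp_Hseq hji) (?_ : Disjoint _ (Supp (Hseq H₁ f i)))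
  rw [Supp_Hseq, ← sub_add_cancel i 1, ← image_image_eq_Wseq, add_sub_cancel_right,
    disjoint_image_iff (f ^ (i - 1)).injective]
  exact hs.disjoint_image_W0_Supp

lemma disjoint_W_Y (hs : InductiveSetting H₁ f Y₀ W₀) (i : ℤ) :
    Disjoint (Wseq W₀ f i) (Wseq Y₀ f (i - 1)) :=
  (hs.disjoint_W_Supp_Hseq le_rfl).mono_right (hs.Y_subset_Supp_Hseq i)

lemma W_subset_layer (hs : InductiveSetting H₁ f Y₀ W₀) (i : ℤ) :
    Wseq W₀ f i ⊆ Wseq Y₀ f i \ Wseq Y₀ f (i - 1) :=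
  subset_sdiff.mpr ⟨hs.W_subset_Y i, hs.disjoint_W_Y i⟩

lemma disjoint_W_W (hs : InductiveSetting H₁ f Y₀ W₀) {i j : ℤ} (hij : i ≠ j) :
    Disjoint (Wseq W₀ f i) (Wseq W₀ f j) := by
  wlog h : i < j generalizing i j
  · exact (this hij.symm (by omega)).symm
  exact ((hs.disjoint_W_Y j).mono_right ((hs.W_subset_Y i).trans (hs.monotone_Y (by omega)))).symm

lemma image_shell_subset_layer (hs : InductiveSetting H₁ f Y₀ W₀) (q : ℤ) :
    ⇑(f ^ q) '' (Supp H₁ \ Y₀) ⊆ Wseq Y₀ f (q + 1) \ Wseq Y₀ f q := by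
  rw [image_sdiff (f ^ q).injective, ← image_image_eq_Wseq]
  exact sdiff_subset_sdiff_left (image_mono hs.Supp_subset_image_Y0)

lemma disjoint_shell_W0 (hs : InductiveSetting H₁ f Y₀ W₀) (q : ℤ) :
    Disjoint (⇑(f ^ q) '' (Supp H₁ \ Y₀)) W₀ := by
  have hW₀ : W₀ = ⇑(f ^ q) '' Wseq W₀ f (-q) := by rw [← Wseq_add, add_neg_cancel, Wseq_zero]
  rw [hW₀, disjoint_image_iff (f ^ q).injective]
  rcases le_or_gt 1 (-q) with hq | hq
  · simpa using (hs.disjoint_W_Supp_Hseq hq).symm.mono_left sdiff_subset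
  · refine disjoint_sdiff_left.mono_right ((hs.W_subset_Y _).trans ?_)
    simpa using hs.monotone_Y (by omega : -q ≤ 0)

lemma W0_subset_Y (hs : InductiveSetting H₁ f Y₀ W₀) {b : ℤ} (hb : 0 ≤ b) : W₀ ⊆ Wseq Y₀ f b := by
  simpa using (hs.W_subset_Y 0).trans (hs.monotone_Y hb)

lemma window_le_fixingSubgroup (hs : InductiveSetting H₁ f Y₀ W₀) (a b : ℤ) :
    window H₁ f a b ≤ fixingSubgroup (Perm Z) (Wseq Y₀ f b)ᶜ :=
  iSup₂_le fun i hi => (le_fixingSubgroup_compl_Supp _).trans <| fixingSubgroup_antitone _ _ <|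
    compl_subset_compl.mpr ((hs.Supp_Hseq_subset_Y i).trans (hs.monotone_Y hi.2))

lemma window_le_fixingSubgroup_W0 (hs : InductiveSetting H₁ f Y₀ W₀) {a b : ℤ} (hb : b ≤ 0) :
    window H₁ f a b ≤ fixingSubgroup (Perm Z) W₀ :=
  iSup₂_le fun i hi => (le_fixingSubgroup_compl_Supp _).trans <| fixingSubgroup_antitone _ _ <|
    subset_compl_iff_disjoint_right.mpr (by simpa using hs.disjoint_W_Supp_Hseq (hi.2.trans hb))

lemma exists_mul_mem_wreathBase_of_mem_window (hs : InductiveSetting H₁ f Y₀ W₀) {a b : ℤ}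
    {m : Perm Z} (hm : m ∈ window H₁ f a b) :
    ∃ μ ∈ Hseq H₁ f b, ∃ d ∈ wreathBase (Hseq H₁ f b) (window H₁ f a (b - 1))
      (Wseq Y₀ f (b - 1)) (hs.window_le_fixingSubgroup a (b - 1)), μ * d = m :=
  exists_mul_mem_wreathBase (hs.isPreWreath_Hseq b).isRigidBlock (window_le_sup a b hm)

lemma exists_mul_eqOn_of_mem_window (hs : InductiveSetting H₁ f Y₀ W₀) {a b : ℤ} {m : Perm Z}
    (hm : m ∈ window H₁ f a (b + 1)) :
    ∃ μ ∈ Hseq H₁ f (b + 1), ∃ k ∈ window H₁ f a b, EqOn m (μ * k) (Wseq Y₀ f b) := by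
  obtain ⟨μ, hμ, d, hd, rfl⟩ := hs.exists_mul_mem_wreathBase_of_mem_window hm
  obtain ⟨k, hk, hdk⟩ := hd.2 1 (one_mem _)
  rw [add_sub_cancel_right] at hk hdk
  exact ⟨μ, hμ, k, hk, fun y hy => congrArg μ (hdk y hy)⟩

lemma image_subset_shell (hs : InductiveSetting H₁ f Y₀ W₀) {b : ℤ} {μ : Perm Z}
    (hμ : μ ∈ Hseq H₁ f (b + 1)) (hdisj : Disjoint (⇑μ '' Wseq Y₀ f b) (Wseq Y₀ f b)) :
    ⇑μ '' Wseq Y₀ f b ⊆ ⇑(f ^ b) '' (Supp H₁ \ Y₀) := by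
  have hY := hs.Y_subset_Supp_Hseq (b + 1)
  rw [add_sub_cancel_right] at hY
  have hS := image_eq_of_mem_fixingSubgroup_compl (le_fixingSubgroup_compl_Supp _ hμ)
  rw [Supp_Hseq, add_sub_cancel_right] at hY hS
  rw [image_sdiff (f ^ b).injective]
  exact subset_sdiff.mpr ⟨(image_mono hY).trans hS.le, hdisj⟩

lemma exists_eqOn_Rseq_of_mem_window (hs : InductiveSetting H₁ f Y₀ W₀) {a b : ℤ} {m : Perm Z}
    (hm : m ∈ window H₁ f a b) : ∃ r ∈ Rseq H₁ f 1, EqOn m r W₀ := by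
  suffices h : ∀ b, 0 ≤ b → ∀ m ∈ window H₁ f a b, ∃ r ∈ Rseq H₁ f 1, EqOn m r W₀ from
    h (max b 0) (le_max_right _ _) m (window_mono le_rfl (le_max_left _ _) hm)
  refine Int.leInduction (fun m hm => ⟨1, one_mem _, fun w hw => ?_⟩) fun b hb ih m hm => ?_
  · exact mem_fixingSubgroup_iff_apply.mp (hs.window_le_fixingSubgroup_W0 le_rfl hm) w hw
  obtain ⟨μ, hμ, k, hk, hmk⟩ := hs.exists_mul_eqOn_of_mem_window hm
  obtain ⟨r, hr, hkr⟩ := ih k hk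
  refine ⟨μ * r, mul_mem (Hseq_le_Rseq (by omega) hμ) hr, fun w hw => ?_⟩
  rw [hmk (hs.W0_subset_Y hb hw), mul_apply, mul_apply, hkr hw]

lemma mem_fixingSubgroup_or_image_subset_shell (hs : InductiveSetting H₁ f Y₀ W₀) {a b : ℤ}
    {m : Perm Z} (hm : m ∈ window H₁ f a b) :
    m ∈ fixingSubgroup (Perm Z) W₀ ∨ ∃ q : ℤ, ⇑m '' W₀ ⊆ ⇑(f ^ q) '' (Supp H₁ \ Y₀) := by
  suffices h : ∀ b, 0 ≤ b → ∀ m ∈ window H₁ f a b,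
      m ∈ fixingSubgroup (Perm Z) W₀ ∨ ∃ q : ℤ, ⇑m '' W₀ ⊆ ⇑(f ^ q) '' (Supp H₁ \ Y₀) from
    h (max b 0) (le_max_right _ _) m (window_mono le_rfl (le_max_left _ _) hm)
  refine Int.leInduction (fun m hm => .inl (hs.window_le_fixingSubgroup_W0 le_rfl hm))
    fun b hb ih m hm => ?_
  obtain ⟨μ, hμ, k, hk, hmk⟩ := hs.exists_mul_eqOn_of_mem_window hm
  have hkW : ⇑k '' W₀ ⊆ Wseq Y₀ f b := by
    rw [← image_eq_of_mem_fixingSubgroup_compl (hs.window_le_fixingSubgroup a b hk)]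
    exact image_mono (hs.W0_subset_Y hb)
  have hrigid := (hs.isPreWreath_Hseq (b + 1)).isRigidBlock
  rw [add_sub_cancel_right] at hrigid
  rcases hrigid.mem_fixingSubgroup_or_disjoint hμ with hfix | hdisj
  · have hmk' : EqOn m k W₀ := fun w hw => by
      rw [hmk (hs.W0_subset_Y hb hw), mul_apply,
        mem_fixingSubgroup_iff_apply.mp hfix _ (hkW (mem_image_of_mem k hw))]
    refine (ih k hk).imp (fun hkfix => ?_) fun ⟨q, hq⟩ => ⟨q, hmk'.image_eq ▸ hq⟩
    exact mem_fixingSubgroup_iff_apply.mpr fun w hw =>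
      (hmk' hw).trans (mem_fixingSubgroup_iff_apply.mp hkfix w hw)
  · refine .inr ⟨b, ?_⟩
    rw [(hmk.mono (hs.W0_subset_Y hb)).image_eq, image_coe_mul]
    exact (image_mono hkW).trans (hs.image_subset_shell hμ hdisj)

lemma image_subset_or_disjoint (hs : InductiveSetting H₁ f Y₀ W₀) {u : Perm Z}
    (hu : u ∈ H₁ ⊔ zpowers f) (k : ℤ) :
    ⇑u '' W₀ ⊆ Wseq Y₀ f k ∨ Disjoint (⇑u '' W₀) (Wseq Y₀ f k) := by
  obtain ⟨n, a, b, m, hm, rfl⟩ := exists_zpow_mul_mem_window hu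
  rw [image_coe_mul]
  rcases hs.mem_fixingSubgroup_or_image_subset_shell hm with hfix | ⟨q, hq⟩
  · refine hs.monotone_Y.subset_or_disjoint_of_subset_sdiff (p := n - 1) ?_ k
    rw [image_eq_of_mem_fixingSubgroup hfix, sub_add_cancel]
    exact hs.W_subset_layer n
  · refine hs.monotone_Y.subset_or_disjoint_of_subset_sdiff (p := n + q)
      ((image_mono hq).trans ?_) k
    rw [← image_coe_mul, ← zpow_add]
    exact hs.image_shell_subset_layer (n + q)

lemma apply_eq_of_image_inter_nonempty (hs : InductiveSetting H₁ f Y₀ W₀) {v : Perm Z}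
    (hv : v ∈ H₁ ⊔ zpowers f) (hne : (⇑v '' W₀ ∩ W₀).Nonempty) : ∀ x ∈ W₀, v x = x := by
  obtain ⟨n, a, b, m, hm, rfl⟩ := exists_zpow_mul_mem_window hv
  rw [image_coe_mul] at hne
  rcases hs.mem_fixingSubgroup_or_image_subset_shell hm with hfix | ⟨q, hq⟩
  · rw [image_eq_of_mem_fixingSubgroup hfix] at hne
    obtain rfl : n = 0 := by
      by_contra hn
      exact not_disjoint_iff_nonempty_inter.mpr hne
        (by simpa using hs.disjoint_W_W hn : Disjoint (Wseq W₀ f n) W₀)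
    simpa using mem_fixingSubgroup_iff_apply.mp hfix
  · refine absurd ((hs.disjoint_shell_W0 (n + q)).mono_left ?_)
      (not_disjoint_iff_nonempty_inter.mpr hne)
    rw [zpow_add, image_coe_mul]
    exact image_mono hq

lemma exists_image_ne_of_mem_wreathBase (hs : InductiveSetting H₁ f Y₀ W₀) {a i : ℤ} {d : Perm Z}
    (IH : ∀ k ∈ window H₁ f a (i - 1), k ≠ 1 →
      ∃ u ∈ H₁ ⊔ zpowers f, ⇑k '' (⇑u '' W₀) ≠ ⇑u '' W₀)
    (hd : d ∈ wreathBase (Hseq H₁ f i) (window H₁ f a (i - 1)) (Wseq Y₀ f (i - 1))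
      (hs.window_le_fixingSubgroup a (i - 1))) (hd1 : d ≠ 1) :
    ∃ u ∈ H₁ ⊔ zpowers f, ⇑d '' (⇑u '' W₀) ≠ ⇑u '' W₀ := by
  obtain ⟨c, hc, k, hk, hk1, hdk⟩ := exists_ne_one_of_mem_wreathBase hd hd1
  obtain ⟨u, hu, hne⟩ := IH k hk hk1
  have hsub : ⇑u '' W₀ ⊆ Wseq Y₀ f (i - 1) := by
    refine (hs.image_subset_or_disjoint hu _).resolve_right fun hdisj => hne ?_
    refine image_eq_of_mem_fixingSubgroup (fixingSubgroup_antitone _ _ ?_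
      (hs.window_le_fixingSubgroup a (i - 1) hk))
    exact subset_compl_iff_disjoint_right.mpr hdisj
  refine ⟨c * u, mul_mem (Hseq_le_sup i hc) hu, ?_⟩
  rw [image_coe_mul, image_image_eq_of_forall_mem fun y hy => hdk y (hsub hy)]
  exact (image_injective.mpr c.injective).ne hne

lemma exists_image_ne_of_mem_window (hs : InductiveSetting H₁ f Y₀ W₀) {a b : ℤ} {m : Perm Z}
    (hm : m ∈ window H₁ f a b) (hm1 : m ≠ 1) :
    ∃ u ∈ H₁ ⊔ zpowers f, ⇑m '' (⇑u '' W₀) ≠ ⇑u '' W₀ := by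
  suffices h : ∀ b, a - 1 ≤ b → ∀ m ∈ window H₁ f a b, m ≠ 1 →
      ∃ u ∈ H₁ ⊔ zpowers f, ⇑m '' (⇑u '' W₀) ≠ ⇑u '' W₀ from
    h (max b (a - 1)) (le_max_right _ _) m (window_mono le_rfl (le_max_left _ _) hm) hm1
  refine Int.leInduction (fun m hm hm1 => ?_) fun b _ ih m hm hm1 => ?_
  · rw [window_eq_bot (by omega), mem_bot] at hm
    exact absurd hm hm1
  obtain ⟨μ, hμ, d, hd, rfl⟩ := hs.exists_mul_mem_wreathBase_of_mem_window hm
  by_cases hμ1 : μ = 1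
  · subst hμ1
    rw [one_mul] at hm1 ⊢
    exact hs.exists_image_ne_of_mem_wreathBase (fun k hk => ih k (by simpa using hk)) hd hm1
  · obtain ⟨c, hc, hne⟩ := (hs.isPreWreath_Hseq _).exists_image_ne_of_mul_mem_wreathBase hμ hμ1
      hd (hs.W_subset_Y _) (hs.W0_nonempty.image _)
    exact ⟨c * f ^ (b + 1 - 1), mul_mem (Hseq_le_sup _ hc) (zpow_mem_sup _),
      by rwa [image_coe_mul c]⟩

lemma exists_image_ne (hs : InductiveSetting H₁ f Y₀ W₀) {v : Perm Z}
    (hv : v ∈ H₁ ⊔ zpowers f) (hv1 : v ≠ 1) :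
    ∃ u ∈ H₁ ⊔ zpowers f, ⇑v '' (⇑u '' W₀) ≠ ⇑u '' W₀ := by
  obtain ⟨n, a, b, m, hm, rfl⟩ := exists_zpow_mul_mem_window hv
  rcases eq_or_ne n 0 with rfl | hn
  · rw [zpow_zero, one_mul] at hv1 ⊢
    exact hs.exists_image_ne_of_mem_window hm hv1
  refine ⟨f ^ (b + 1), zpow_mem_sup _, ?_⟩
  have hfix : ⇑m '' Wseq W₀ f (b + 1) = Wseq W₀ f (b + 1) := by
    refine image_eq_of_mem_fixingSubgroup (fixingSubgroup_antitone _ _ ?_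
      (hs.window_le_fixingSubgroup a b hm))
    exact subset_compl_iff_disjoint_right.mpr (by simpa using hs.disjoint_W_Y (b + 1))
  change ⇑(f ^ n * m) '' Wseq W₀ f (b + 1) ≠ Wseq W₀ f (b + 1)
  rw [image_coe_mul, hfix, ← Wseq_add]
  exact (hs.disjoint_W_W (by omega)).ne (hs.W0_nonempty.image _).ne_empty

lemma wreathCarrier_eq (hs : InductiveSetting H₁ f Y₀ W₀) :
    wreathCarrier (H₁ ⊔ zpowers f) W₀
      = {A : Set Z | ∃ n : ℤ, ∃ r ∈ Rseq H₁ f 1, A = ⇑(f ^ n) '' (⇑r '' W₀)} := by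
  ext A
  constructor
  · rintro ⟨v, hv, rfl⟩
    obtain ⟨n, a, b, m, hm, rfl⟩ := exists_zpow_mul_mem_window hv
    obtain ⟨r, hr, hmr⟩ := hs.exists_eqOn_Rseq_of_mem_window hm
    exact ⟨n, r, hr, by rw [image_coe_mul, hmr.image_eq]⟩
  · rintro ⟨n, r, hr, rfl⟩
    exact ⟨f ^ n * r, mul_mem (zpow_mem_sup n) (Rseq_le_sup hr), (image_coe_mul _ _ _).symm⟩

end InductiveSetting

end

/-- In the inductive setting, with `V = ⟨H₁, f⟩`:
`(Z, Y₁ ∪ Supp(f), V, W₀)` is a pre-wreath structure whose carrier `{W₀v : v ∈ V}` is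
the union over `n ∈ ℤ` of the families `{W₀rfⁿ : r ∈ R₁}` (apply `r` first, then
`fⁿ`). -/
theorem stmt15 {Z : Type*} (H₁ : Subgroup (Equiv.Perm Z)) (f : Equiv.Perm Z)
    (Y₀ W₀ : Set Z) (hsetting : InductiveSetting H₁ f Y₀ W₀) :
    IsPreWreath (⇑f '' Y₀ ∪ {z : Z | f z ≠ z}) (H₁ ⊔ Subgroup.zpowers f) W₀ ∧
    wreathCarrier (H₁ ⊔ Subgroup.zpowers f) W₀
      = {A : Set Z | ∃ n : ℤ, ∃ r ∈ Rseq H₁ f 1, A = ⇑(f ^ n) '' (⇑r '' W₀)} := by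
  have hW₀ : W₀ ⊆ f '' Y₀ :=
    hsetting.W0_subset_Y0.trans (hsetting.Y0_subset_Supp.trans hsetting.Supp_subset_image_Y0)
  have hfix := hsetting.isPreWreath.sup_zpowers_le_fixingSubgroup f
  refine ⟨⟨ne_bot_of_le_ne_bot hsetting.isPreWreath.1 le_sup_left,
    fun _ hh => Equiv.Perm.mem_fixingSubgroup_compl_iff_apply.mp (hfix hh),
    hW₀.trans Set.subset_union_left, hsetting.W0_nonempty,
    fun _ hv => hsetting.apply_eq_of_image_inter_nonempty hv,
    fun _ hv => hsetting.exists_image_ne hv⟩, hsetting.wreathCarrier_eq⟩
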